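/- Let k be a field, n ≥ 2 an integer, ζ ∈ k a primitive n-th root of unity, r an integer with ζ^r ≠ 1 and ζ^{2r} ≠ 1, and x ∈ k with x ≠ 0. Then the k-algebra homomorphisms φ : 𝒥_x(r) → k are exactly those determined by triples (φ(e₀), φ(e₁), φ(e₂)) = (a, b, c) with either (a, b, c) = (ζ^{2r} − 1, 0, 0), or a = 0 and b·c = x. That is, every algebra homomorphism 𝒥_x(r) → k yields such a triple, and every such triple extends (uniquely) to an algebra homomorphism. -/

import Mathlib

/-- The defining relations of the Jackson algebra `𝒥_x(r)` over `k`: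
generators `e₀, e₁, e₂` and relations `e₀e₁ = ζ^r e₁e₀`, `e₂e₀ = ζ^r e₀e₂`,
`e₂e₁ = ζ^{2r} e₁e₂ + x e₀ + x (1 − ζ^{2r})`. -/
inductive JacksonRel (k : Type*) [Field k] (ζ : k) (r : ℤ) (x : k) :
    FreeAlgebra k (Fin 3) → FreeAlgebra k (Fin 3) → Prop
  | r01 : JacksonRel k ζ r x (FreeAlgebra.ι k 0 * FreeAlgebra.ι k 1)
      (ζ ^ r • (FreeAlgebra.ι k 1 * FreeAlgebra.ι k 0))
  | r20 : JacksonRel k ζ r x (FreeAlgebra.ι k 2 * FreeAlgebra.ι k 0)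
      (ζ ^ r • (FreeAlgebra.ι k 0 * FreeAlgebra.ι k 2))
  | r21 : JacksonRel k ζ r x (FreeAlgebra.ι k 2 * FreeAlgebra.ι k 1)
      (ζ ^ (2 * r) • (FreeAlgebra.ι k 1 * FreeAlgebra.ι k 2) + x • FreeAlgebra.ι k 0 +
        (x * (1 - ζ ^ (2 * r))) • (1 : FreeAlgebra k (Fin 3)))

/-- The Jackson algebra `𝒥_x(r)` over `k`. -/
abbrev Jackson (k : Type*) [Field k] (ζ : k) (r : ℤ) (x : k) :=
  RingQuot (JacksonRel k ζ r x)

/-- The generators `e₀, e₁, e₂` of the Jackson algebra. -/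
noncomputable def JacksonGen (k : Type*) [Field k] (ζ : k) (r : ℤ) (x : k) (i : Fin 3) :
    Jackson k ζ r x :=
  RingQuot.mkAlgHom k (JacksonRel k ζ r x) (FreeAlgebra.ι k i)

/-!
Homomorphisms from `𝒥_x(r)` are the triples satisfying its relations. In `k` the first two
relations give `(1 - ζ^r) a b = 0 = (1 - ζ^r) a c`. So either `a = 0`, and the third relation
becomes `(1 - ζ^{2r}) (b c - x) = 0`, or `b = c = 0`, and it becomes `x (a + 1 - ζ^{2r}) = 0`.
-/

namespace Jackson

variable {k : Type*} [Field k] {ζ : k} {r : ℤ} {x : k} {A : Type*} [Semiring A] [Algebra k A]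

def RelationsHold (ζ : k) (r : ℤ) (x : k) (a b c : A) : Prop :=
  a * b = ζ ^ r • (b * a) ∧ c * a = ζ ^ r • (a * c) ∧
    c * b = ζ ^ (2 * r) • (b * c) + x • a + (x * (1 - ζ ^ (2 * r))) • (1 : A)

theorem algHom_ext {φ ψ : Jackson k ζ r x →ₐ[k] A}
    (h : ∀ i, φ (JacksonGen k ζ r x i) = ψ (JacksonGen k ζ r x i)) : φ = ψ :=
  RingQuot.ringQuot_ext' _ _ _ (FreeAlgebra.hom_ext (funext h))

theorem relationsHold_map (φ : Jackson k ζ r x →ₐ[k] A) :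
    RelationsHold ζ r x (φ (JacksonGen k ζ r x 0)) (φ (JacksonGen k ζ r x 1))
      (φ (JacksonGen k ζ r x 2)) := by
  have hrel {u v : FreeAlgebra k (Fin 3)} (h : JacksonRel k ζ r x u v) :
      φ (RingQuot.mkAlgHom k _ u) = φ (RingQuot.mkAlgHom k _ v) :=
    congrArg φ (RingQuot.mkAlgHom_rel k h)
  refine ⟨?_, ?_, ?_⟩
  · simpa only [JacksonGen, map_mul, map_smul] using hrel .r01
  · simpa only [JacksonGen, map_mul, map_smul] using hrel .r20
  · simpa only [JacksonGen, map_mul, map_smul, map_add, map_one] using hrel .r21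

noncomputable def lift {a b c : A} (h : RelationsHold ζ r x a b c) : Jackson k ζ r x →ₐ[k] A :=
  RingQuot.liftAlgHom k ⟨FreeAlgebra.lift k ![a, b, c], fun u v huv => by
    obtain ⟨h01, h20, h21⟩ := h
    cases huv <;> simpa⟩

theorem lift_gen {a b c : A} (h : RelationsHold ζ r x a b c) (i : Fin 3) :
    lift h (JacksonGen k ζ r x i) = ![a, b, c] i := by
  simp [lift, JacksonGen, RingQuot.liftAlgHom_mkAlgHom_apply]

theorem existsUnique_algHom_iff (a b c : A) :
    (∃! φ : Jackson k ζ r x →ₐ[k] A, φ (JacksonGen k ζ r x 0) = a ∧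
      φ (JacksonGen k ζ r x 1) = b ∧ φ (JacksonGen k ζ r x 2) = c) ↔
      RelationsHold ζ r x a b c := by
  constructor
  · rintro ⟨φ, ⟨rfl, rfl, rfl⟩, -⟩
    exact relationsHold_map φ
  · intro h
    refine ⟨lift h, ⟨lift_gen h 0, lift_gen h 1, lift_gen h 2⟩, ?_⟩
    rintro ψ ⟨h0, h1, h2⟩
    refine algHom_ext fun i => ?_
    fin_cases i <;> simp [lift_gen, h0, h1, h2]

theorem relationsHold_iff (hr1 : ζ ^ r ≠ 1) (hr2 : ζ ^ (2 * r) ≠ 1) (hx : x ≠ 0) {a b c : k} :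
    RelationsHold ζ r x a b c ↔ (a = ζ ^ (2 * r) - 1 ∧ b = 0 ∧ c = 0) ∨ (a = 0 ∧ b * c = x) := by
  have hr1' : 1 - ζ ^ r ≠ 0 := sub_ne_zero.mpr hr1.symm
  have hr2' : 1 - ζ ^ (2 * r) ≠ 0 := sub_ne_zero.mpr hr2.symm
  simp only [RelationsHold, smul_eq_mul, mul_one]
  constructor
  · rintro ⟨h01, h20, h21⟩
    have hab : a * b = 0 :=
      (mul_eq_zero.mp (by linear_combination h01 : (1 - ζ ^ r) * (a * b) = 0)).resolve_left hr1'
    have hac : a * c = 0 :=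
      (mul_eq_zero.mp (by linear_combination h20 : (1 - ζ ^ r) * (a * c) = 0)).resolve_left hr1'
    by_cases ha : a = 0
    · subst ha
      refine .inr ⟨rfl, mul_left_cancel₀ hr2' ?_⟩
      linear_combination h21
    · have hb : b = 0 := (mul_eq_zero.mp hab).resolve_left ha
      have hc : c = 0 := (mul_eq_zero.mp hac).resolve_left ha
      subst hb hc
      refine .inl ⟨mul_left_cancel₀ hx ?_, rfl, rfl⟩
      linear_combination -h21
  · rintro (⟨rfl, rfl, rfl⟩ | ⟨rfl, hbc⟩)
    · exact ⟨by ring, by ring, by ring⟩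
    · exact ⟨by ring, by ring, by linear_combination (1 - ζ ^ (2 * r)) * hbc⟩

end Jackson

theorem jackson_one_dimensional_points_general (k : Type*) [Field k]
    (ζ : k) (r : ℤ)
    (hr1 : ζ ^ r ≠ 1) (hr2 : ζ ^ (2 * r) ≠ 1) (x : k) (hx : x ≠ 0) :
    (∀ φ : Jackson k ζ r x →ₐ[k] k,
      (φ (JacksonGen k ζ r x 0) = ζ ^ (2 * r) - 1 ∧
        φ (JacksonGen k ζ r x 1) = 0 ∧ φ (JacksonGen k ζ r x 2) = 0) ∨
      (φ (JacksonGen k ζ r x 0) = 0 ∧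
        φ (JacksonGen k ζ r x 1) * φ (JacksonGen k ζ r x 2) = x)) ∧
    (∀ a b c : k,
      ((a = ζ ^ (2 * r) - 1 ∧ b = 0 ∧ c = 0) ∨ (a = 0 ∧ b * c = x)) →
      ∃! φ : Jackson k ζ r x →ₐ[k] k,
        φ (JacksonGen k ζ r x 0) = a ∧ φ (JacksonGen k ζ r x 1) = b ∧
          φ (JacksonGen k ζ r x 2) = c) :=
  ⟨fun φ => (Jackson.relationsHold_iff hr1 hr2 hx).mp (Jackson.relationsHold_map φ),
    fun _ _ _ h =>
      (Jackson.existsUnique_algHom_iff _ _ _).mpr ((Jackson.relationsHold_iff hr1 hr2 hx).mpr h)⟩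

/-- Let `k` be a field, `n ≥ 2`, `ζ ∈ k` a primitive `n`-th root
of unity, `r` an integer with `ζ^r ≠ 1` and `ζ^{2r} ≠ 1`, and `x ≠ 0`.  The
`k`-algebra homomorphisms `φ : 𝒥_x(r) → k` are exactly those determined by triples
`(φ e₀, φ e₁, φ e₂) = (a, b, c)` with either `(a, b, c) = (ζ^{2r} − 1, 0, 0)`, or
`a = 0` and `b·c = x`: every algebra homomorphism yields such a triple, and every
such triple extends (uniquely) to an algebra homomorphism. -/
theorem jackson_one_dimensional_points (k : Type*) [Field k] (n : ℕ) (hn : 2 ≤ n)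
    (ζ : k) (hζ : IsPrimitiveRoot ζ n) (r : ℤ)
    (hr1 : ζ ^ r ≠ 1) (hr2 : ζ ^ (2 * r) ≠ 1) (x : k) (hx : x ≠ 0) :
    (∀ φ : Jackson k ζ r x →ₐ[k] k,
      (φ (JacksonGen k ζ r x 0) = ζ ^ (2 * r) - 1 ∧
        φ (JacksonGen k ζ r x 1) = 0 ∧ φ (JacksonGen k ζ r x 2) = 0) ∨
      (φ (JacksonGen k ζ r x 0) = 0 ∧
        φ (JacksonGen k ζ r x 1) * φ (JacksonGen k ζ r x 2) = x)) ∧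
    (∀ a b c : k,
      ((a = ζ ^ (2 * r) - 1 ∧ b = 0 ∧ c = 0) ∨ (a = 0 ∧ b * c = x)) →
      ∃! φ : Jackson k ζ r x →ₐ[k] k,
        φ (JacksonGen k ζ r x 0) = a ∧ φ (JacksonGen k ζ r x 1) = b ∧
          φ (JacksonGen k ζ r x 2) = c) :=
  jackson_one_dimensional_points_general k ζ r hr1 hr2 x hx
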